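/- arXiv:2312.04754 — 2 statements merged into one kernel-verified Lean document; each statement's English description precedes it below -/
import Mathlib

section
/- Fix matchings S = {e_1,…,e_A} and S' = {e'_1,…,e'_B} with true weights satisfying r_w(S') − r_w(S) ≥ Δ > 0. Suppose for each link e and each sample count c the events A_e,c : ŵ_{e,c} − √((L+1)ln t/c) ≥ w_e and B_e,c : ŵ_{e,c} + √((L+1)ln t/c) ≤ w_e each have probability at most t^{−2(L+1)}, where A + B ≤ 2L ≤ 2(L+1). If every link e_i ∈ S has been sampled at least l = ⌈4L²(L+1)·ln t / Δ²⌉ times, then the probability that the UCB index sum of S exceeds that of S' is at most 2L·t^{−2}, i.e., Pr{ Σ_{i=1}^A (ŵ_{e_i} + √((L+1)ln t/τ_{e_i})) ≥ Σ_{j=1}^B (ŵ_{e'_j} + √((L+1)ln t/τ_{e'_j})) } ≤ 2L·t^{−2}. -/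
open MeasureTheory

/-- If the non-near-optimal matching `S` has every link sampled at least
`l = ⌈4L²(L+1)·ln t / Δ²⌉` times, and per-link per-count Chernoff–Hoeffding
bounds hold, then the probability that the UCB index sum of `S` exceeds that of
the near-optimal matching `S'` (whose true weight exceeds that of `S` by at
least `Δ`) is at most `2L·t⁻²`. -/
theorem ucb_index_comparison_bound {Ω ι : Type*} [MeasurableSpace Ω]
    [DecidableEq ι]
    (μ : Measure Ω) [IsProbabilityMeasure μ]
    (S S' : Finset ι) (w : ι → ℝ) (what : ι → ℕ → Ω → ℝ) (τ : ι → Ω → ℕ)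
    (L t : ℕ) (hL : 1 ≤ L) (ht : 2 ≤ t)
    (hA : S.card ≤ L) (hB : S'.card ≤ L)
    (Δ : ℝ) (hΔ : 0 < Δ)
    (hgap : ∑ e ∈ S', w e - ∑ e ∈ S, w e ≥ Δ)
    (hw01 : ∀ e, 0 ≤ w e ∧ w e ≤ 1)
    (hwhat01 : ∀ e c ω, 0 ≤ what e c ω ∧ what e c ω ≤ 1)
    (hconcA : ∀ e, ∀ c : ℕ, 1 ≤ c → c ≤ t →
      μ {ω | what e c ω - Real.sqrt (((L : ℝ) + 1) * Real.log t / c) ≥ w e}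
        ≤ ENNReal.ofReal (((t : ℝ) ^ (2 * (L + 1)))⁻¹))
    (hconcB : ∀ e, ∀ c : ℕ, 1 ≤ c → c ≤ t →
      μ {ω | what e c ω + Real.sqrt (((L : ℝ) + 1) * Real.log t / c) ≤ w e}
        ≤ ENNReal.ofReal (((t : ℝ) ^ (2 * (L + 1)))⁻¹))
    (hτS : ∀ e ∈ S, ∀ ω,
      ⌈4 * (L : ℝ) ^ 2 * ((L : ℝ) + 1) * Real.log t / Δ ^ 2⌉₊ ≤ τ e ω ∧ τ e ω < t)
    (hτS' : ∀ e ∈ S', ∀ ω, 1 ≤ τ e ω ∧ τ e ω < t) :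
    μ {ω | ∑ e ∈ S, (what e (τ e ω) ω
              + Real.sqrt (((L : ℝ) + 1) * Real.log t / (τ e ω)))
          ≥ ∑ e ∈ S', (what e (τ e ω) ω
              + Real.sqrt (((L : ℝ) + 1) * Real.log t / (τ e ω)))}
      ≤ ENNReal.ofReal (2 * L * ((t : ℝ) ^ 2)⁻¹) := by
  classical
  have ht1 : (1 : ℝ) < (t : ℝ) := by exact_mod_cast lt_of_lt_of_le one_lt_two ht
  have ht0 : (0 : ℝ) < (t : ℝ) := lt_trans one_pos ht1
  have hlog : 0 < Real.log t := Real.log_pos ht1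
  have hL0 : (0 : ℝ) < (L : ℝ) := by exact_mod_cast hL
  set r : ℕ → ℝ := fun c => Real.sqrt (((L : ℝ) + 1) * Real.log t / c) with hrdef
  set badA : ι → ℕ → Set Ω := fun e c => {ω | what e c ω - r c ≥ w e} with hbadA
  set badB : ι → ℕ → Set Ω := fun e c => {ω | what e c ω + r c ≤ w e} with hbadB
  -- S' is nonempty
  have hS'ne : S'.Nonempty := by
    rcases S'.eq_empty_or_nonempty with h | h
    · exfalso
      have h1 : (0:ℝ) ≤ ∑ e ∈ S, w e := Finset.sum_nonneg fun e _ => (hw01 e).1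
      rw [h] at hgap; simp at hgap; linarith
    · exact h
  -- radius bound for links in S
  have hrad : ∀ e ∈ S, ∀ ω, r (τ e ω) ≤ Δ / (2 * L) := by
    intro e he ω
    have hτ := (hτS e he ω).1
    have hc : (4 * (L : ℝ) ^ 2 * ((L : ℝ) + 1) * Real.log t / Δ ^ 2) ≤ (τ e ω : ℝ) := by
      calc (4 * (L : ℝ) ^ 2 * ((L : ℝ) + 1) * Real.log t / Δ ^ 2)
          ≤ (⌈4 * (L : ℝ) ^ 2 * ((L : ℝ) + 1) * Real.log t / Δ ^ 2⌉₊ : ℝ) := Nat.le_ceil _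
        _ ≤ (τ e ω : ℝ) := by exact_mod_cast hτ
    have hτpos : (0:ℝ) < (τ e ω : ℝ) := by
      have : 0 < 4 * (L : ℝ) ^ 2 * ((L : ℝ) + 1) * Real.log t / Δ ^ 2 := by positivity
      linarith
    have hkey : ((L : ℝ) + 1) * Real.log t / (τ e ω) ≤ (Δ / (2 * L)) ^ 2 := by
      rw [div_le_iff₀ hτpos]
      have : (Δ / (2 * L)) ^ 2 = Δ ^ 2 / (4 * L ^ 2) := by
        field_simp; ring
      rw [this, div_mul_eq_mul_div, le_div_iff₀ (by positivity)]
      rw [div_le_iff₀ (by positivity)] at hc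
      ring_nf at hc ⊢
      linarith [hc]
    calc r (τ e ω) ≤ Real.sqrt ((Δ / (2 * L)) ^ 2) := Real.sqrt_le_sqrt hkey
      _ = Δ / (2 * L) := Real.sqrt_sq (by positivity)
  -- inclusion into union of bad events
  have hsub : {ω | ∑ e ∈ S, (what e (τ e ω) ω + r (τ e ω))
          ≥ ∑ e ∈ S', (what e (τ e ω) ω + r (τ e ω))}
      ⊆ (⋃ e ∈ S, ⋃ c ∈ Finset.Icc 1 t, badA e c)
        ∪ (⋃ e ∈ S', ⋃ c ∈ Finset.Icc 1 t, badB e c) := by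
    intro ω hω
    by_contra hcon
    simp only [Set.mem_union, Set.mem_iUnion, not_or, not_exists] at hcon
    obtain ⟨h1, h2⟩ := hcon
    -- no A event on S: what - r < w
    have hS : ∀ e ∈ S, what e (τ e ω) ω - r (τ e ω) < w e := by
      intro e he
      have hmem : τ e ω ∈ Finset.Icc 1 t := by
        have h := hτS e he ω
        have hl1 : 1 ≤ τ e ω := by
          refine le_trans ?_ h.1
          rw [Nat.one_le_ceil_iff]; positivity
        exact Finset.mem_Icc.mpr ⟨hl1, le_of_lt h.2⟩
      have := h1 e he (τ e ω) hmem
      simp only [hbadA, Set.mem_setOf_eq, not_le] at this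
      linarith [this]
    have hS' : ∀ e ∈ S', w e < what e (τ e ω) ω + r (τ e ω) := by
      intro e he
      have h := hτS' e he ω
      have hmem : τ e ω ∈ Finset.Icc 1 t := Finset.mem_Icc.mpr ⟨h.1, le_of_lt h.2⟩
      have := h2 e he (τ e ω) hmem
      simp only [hbadB, Set.mem_setOf_eq, not_le] at this
      linarith [this]
    have key1 : ∑ e ∈ S', w e < ∑ e ∈ S', (what e (τ e ω) ω + r (τ e ω)) :=
      Finset.sum_lt_sum_of_nonempty hS'ne hS'
    have key2 : ∑ e ∈ S, (what e (τ e ω) ω + r (τ e ω)) ≤ ∑ e ∈ S, w e + Δ := by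
      have h3 : ∑ e ∈ S, (what e (τ e ω) ω + r (τ e ω))
          ≤ ∑ e ∈ S, (w e + 2 * r (τ e ω)) := by
        refine Finset.sum_le_sum fun e he => ?_
        have := hS e he; linarith
      have h4 : ∑ e ∈ S, (w e + 2 * r (τ e ω)) ≤ ∑ e ∈ S, (w e + Δ / L) := by
        refine Finset.sum_le_sum fun e he => ?_
        have h5 := hrad e he ω
        have h6 : 2 * r (τ e ω) ≤ Δ / L := by
          rw [le_div_iff₀ hL0]
          rw [le_div_iff₀ (by positivity : (0:ℝ) < 2 * L)] at h5
          ring_nf at h5 ⊢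
          linarith [h5]
        linarith
      have h6 : ∑ e ∈ S, (w e + Δ / L) = ∑ e ∈ S, w e + S.card * (Δ / L) := by
        rw [Finset.sum_add_distrib, Finset.sum_const, nsmul_eq_mul]
      have h7 : (S.card : ℝ) * (Δ / L) ≤ Δ := by
        have hcard : (S.card : ℝ) ≤ (L : ℝ) := by exact_mod_cast hA
        rw [mul_div_assoc']
        rw [div_le_iff₀ hL0]
        nlinarith [hcard, hΔ.le]
      linarith [h3, h4]
    have hωs : ∑ e ∈ S', (what e (τ e ω) ω + r (τ e ω))
        ≤ ∑ e ∈ S, (what e (τ e ω) ω + r (τ e ω)) := hω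
    linarith [key1, key2, hωs, hgap]
  -- measure bound
  set β := ENNReal.ofReal (((t : ℝ) ^ (2 * (L + 1)))⁻¹) with hβ
  have hb1 : μ (⋃ e ∈ S, ⋃ c ∈ Finset.Icc 1 t, badA e c) ≤ (S.card * t : ℕ) • β := by
    calc μ (⋃ e ∈ S, ⋃ c ∈ Finset.Icc 1 t, badA e c)
        ≤ ∑ e ∈ S, μ (⋃ c ∈ Finset.Icc 1 t, badA e c) := measure_biUnion_finset_le _ _
      _ ≤ ∑ e ∈ S, ∑ c ∈ Finset.Icc 1 t, μ (badA e c) :=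
          Finset.sum_le_sum fun e _ => measure_biUnion_finset_le _ _
      _ ≤ ∑ e ∈ S, ∑ c ∈ Finset.Icc 1 t, β := by
          refine Finset.sum_le_sum fun e _ => Finset.sum_le_sum fun c hc => ?_
          obtain ⟨hc1, hc2⟩ := Finset.mem_Icc.mp hc
          exact hconcA e c hc1 hc2
      _ = (S.card * t : ℕ) • β := by
          simp [Finset.sum_const, Nat.card_Icc, mul_smul]
  have hb2 : μ (⋃ e ∈ S', ⋃ c ∈ Finset.Icc 1 t, badB e c) ≤ (S'.card * t : ℕ) • β := by
    calc μ (⋃ e ∈ S', ⋃ c ∈ Finset.Icc 1 t, badB e c)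
        ≤ ∑ e ∈ S', μ (⋃ c ∈ Finset.Icc 1 t, badB e c) := measure_biUnion_finset_le _ _
      _ ≤ ∑ e ∈ S', ∑ c ∈ Finset.Icc 1 t, μ (badB e c) :=
          Finset.sum_le_sum fun e _ => measure_biUnion_finset_le _ _
      _ ≤ ∑ e ∈ S', ∑ c ∈ Finset.Icc 1 t, β := by
          refine Finset.sum_le_sum fun e _ => Finset.sum_le_sum fun c hc => ?_
          obtain ⟨hc1, hc2⟩ := Finset.mem_Icc.mp hc
          exact hconcB e c hc1 hc2
      _ = (S'.card * t : ℕ) • β := by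
          simp [Finset.sum_const, Nat.card_Icc, mul_smul]
  have htotal : μ {ω | ∑ e ∈ S, (what e (τ e ω) ω + r (τ e ω))
          ≥ ∑ e ∈ S', (what e (τ e ω) ω + r (τ e ω))}
      ≤ ((S.card * t : ℕ) : ENNReal) * β + ((S'.card * t : ℕ) : ENNReal) * β := by
    calc μ _ ≤ μ ((⋃ e ∈ S, ⋃ c ∈ Finset.Icc 1 t, badA e c)
        ∪ (⋃ e ∈ S', ⋃ c ∈ Finset.Icc 1 t, badB e c)) := measure_mono hsub
      _ ≤ μ (⋃ e ∈ S, ⋃ c ∈ Finset.Icc 1 t, badA e c)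
          + μ (⋃ e ∈ S', ⋃ c ∈ Finset.Icc 1 t, badB e c) := measure_union_le _ _
      _ ≤ ((S.card * t : ℕ) : ENNReal) * β + ((S'.card * t : ℕ) : ENNReal) * β := by
          rw [← nsmul_eq_mul, ← nsmul_eq_mul]
          exact add_le_add hb1 hb2
  refine le_trans htotal ?_
  -- final arithmetic
  have hfinal : ((S.card * t : ℕ) : ENNReal) * β + ((S'.card * t : ℕ) : ENNReal) * β
      ≤ ENNReal.ofReal (2 * L * ((t : ℝ) ^ 2)⁻¹) := by
    have hc1 : ((S.card * t : ℕ) : ENNReal) ≤ ((L * t : ℕ) : ENNReal) := by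
      exact_mod_cast Nat.mul_le_mul_right t hA
    have hc2 : ((S'.card * t : ℕ) : ENNReal) ≤ ((L * t : ℕ) : ENNReal) := by
      exact_mod_cast Nat.mul_le_mul_right t hB
    calc ((S.card * t : ℕ) : ENNReal) * β + ((S'.card * t : ℕ) : ENNReal) * β
        ≤ ((L * t : ℕ) : ENNReal) * β + ((L * t : ℕ) : ENNReal) * β :=
          add_le_add (mul_le_mul_left hc1 β) (mul_le_mul_left hc2 β)
      _ = ENNReal.ofReal ((L * t : ℕ) : ℝ) * β + ENNReal.ofReal ((L * t : ℕ) : ℝ) * β := by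
          rw [ENNReal.ofReal_natCast]
      _ = ENNReal.ofReal (2 * ((L * t : ℕ) : ℝ) * ((t : ℝ) ^ (2 * (L + 1)))⁻¹) := by
          rw [hβ, ← ENNReal.ofReal_mul (by positivity), ← two_mul,
            ← ENNReal.ofReal_ofNat, ← ENNReal.ofReal_mul (by norm_num), mul_assoc]
      _ ≤ ENNReal.ofReal (2 * L * ((t : ℝ) ^ 2)⁻¹) := by
          refine ENNReal.ofReal_le_ofReal ?_
          push_cast
          have hpow : (t : ℝ) ^ 2 * (t : ℝ) ≤ (t : ℝ) ^ (2 * (L + 1)) := by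
            have h3 : (t : ℝ) ^ 2 * (t : ℝ) = (t : ℝ) ^ 3 := by ring
            rw [h3]
            exact pow_le_pow_right₀ ht1.le (by omega)
          have hinv : ((t:ℝ) ^ (2*(L+1)))⁻¹ ≤ ((t:ℝ)^2 * t)⁻¹ :=
            inv_anti₀ (by positivity) hpow
          refine le_trans (mul_le_mul_of_nonneg_left hinv (by positivity)) ?_
          have ht0' : (t:ℝ) ≠ 0 := ne_of_gt ht0
          refine le_of_eq ?_
          field_simp
  exact hfinal
end

section
/- Let λ be an arrival rate vector strictly inside α·Λ, where Λ is the capacity region (the convex hull of service-rate vectors of matchings: Λ = {λ : λ ≤ Σ_S θ_S μ·1_S componentwise for some θ_S ≥ 0, Σθ_S ≤ 1}). Then for any nonnegative queue vector q with q* = max_i q_i > 0, there exists ε > 0 (independent of q) such that Σ_i (q_i/q*)·(λ_i + ε) < α·r*_w, where w_i = (q_i/q*)·μ_i and r*_w = max over matchings S of Σ_{i∈S} w_i. -/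
/-- If the arrival-rate vector `lam` lies strictly inside `α·Λ`, where `Λ` is the
convex hull of the service-rate vectors of the matchings, then there is an
`ε > 0` such that for every nonnegative queue vector `q` with maximum
`qstar > 0`, `Σ_i (q_i/q*)·(λ_i + ε) < α · r*_w` where `w_i = (q_i/q*)·μ_i`
and `r*_w` is the maximum weight sum over matchings. -/
theorem strict_capacity_weighted_sum {ι : Type*} [Fintype ι] [DecidableEq ι]
    (mu : ι → ℝ) (hmu : ∀ i, 0 < mu i ∧ mu i ≤ 1)
    (𝒮 : Finset (Finset ι)) (h𝒮 : 𝒮.Nonempty)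
    (α : ℝ) (hα : 0 < α) (lam : ι → ℝ)
    (hlam : ∃ ε > 0, ∃ θ : Finset ι → ℝ,
      (∀ Sch, 0 ≤ θ Sch) ∧ (∀ Sch ∉ 𝒮, θ Sch = 0) ∧
      (∑ Sch ∈ 𝒮, θ Sch ≤ 1) ∧
      ∀ i, lam i + ε ≤ α * ∑ Sch ∈ 𝒮, θ Sch * (if i ∈ Sch then mu i else 0)) :
    ∃ ε > 0, ∀ (q : ι → ℝ) (qstar : ℝ),
      (∀ i, 0 ≤ q i) → (∀ i, q i ≤ qstar) → (∃ i, q i = qstar) → 0 < qstar →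
      ∑ i, (q i / qstar) * (lam i + ε) <
        α * 𝒮.sup' h𝒮 (fun Sch => ∑ i ∈ Sch, (q i / qstar) * mu i) := by
  obtain ⟨ε, hε, θ, hθ0, _, hθsum, hbound⟩ := hlam
  refine ⟨ε / 2, by positivity, ?_⟩
  intro q qstar hq hqle hqmax hqs
  obtain ⟨i0, hi0⟩ := hqmax
  set c : ι → ℝ := fun i => q i / qstar with hc
  have hc0 : ∀ i, 0 ≤ c i := fun i => div_nonneg (hq i) hqs.le
  have hci0 : c i0 = 1 := by simp [hc, hi0, div_self hqs.ne']
  set M : ℝ := 𝒮.sup' h𝒮 (fun Sch => ∑ i ∈ Sch, c i * mu i) with hM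
  have hMle : ∀ S ∈ 𝒮, ∑ i ∈ S, c i * mu i ≤ M := fun S hS =>
    Finset.le_sup' (fun Sch => ∑ i ∈ Sch, c i * mu i) hS
  have hM0 : 0 ≤ M := by
    obtain ⟨S, hS⟩ := h𝒮
    exact le_trans (Finset.sum_nonneg fun i _ => mul_nonneg (hc0 i) (hmu i).1.le)
      (hMle S hS)
  have key : ∑ i, c i * (lam i + ε) ≤ α * M := by
    have h1 : ∑ i, c i * (lam i + ε) ≤
        ∑ i, c i * (α * ∑ Sch ∈ 𝒮, θ Sch * (if i ∈ Sch then mu i else 0)) :=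
      Finset.sum_le_sum fun i _ => mul_le_mul_of_nonneg_left (hbound i) (hc0 i)
    have h2 : ∑ i, c i * (α * ∑ Sch ∈ 𝒮, θ Sch * (if i ∈ Sch then mu i else 0))
        = α * ∑ Sch ∈ 𝒮, θ Sch * ∑ i ∈ Sch, c i * mu i := by
      simp_rw [Finset.mul_sum]
      rw [Finset.sum_comm]
      refine Finset.sum_congr rfl fun Sch _ => ?_
      rw [← Finset.sum_subset (Finset.subset_univ Sch) (fun i _ hi => by simp [hi])]
      refine Finset.sum_congr rfl fun i hi => ?_
      simp only [hi, if_true]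
      ring
    have h3 : ∑ Sch ∈ 𝒮, θ Sch * ∑ i ∈ Sch, c i * mu i ≤ M := by
      calc ∑ Sch ∈ 𝒮, θ Sch * ∑ i ∈ Sch, c i * mu i
          ≤ ∑ Sch ∈ 𝒮, θ Sch * M :=
            Finset.sum_le_sum fun S hS => mul_le_mul_of_nonneg_left (hMle S hS) (hθ0 S)
        _ = (∑ Sch ∈ 𝒮, θ Sch) * M := (Finset.sum_mul _ _ _).symm
        _ ≤ 1 * M := mul_le_mul_of_nonneg_right hθsum hM0
        _ = M := one_mul M
    calc ∑ i, c i * (lam i + ε)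
        ≤ ∑ i, c i * (α * ∑ Sch ∈ 𝒮, θ Sch * (if i ∈ Sch then mu i else 0)) := h1
      _ = α * ∑ Sch ∈ 𝒮, θ Sch * ∑ i ∈ Sch, c i * mu i := h2
      _ ≤ α * M := mul_le_mul_of_nonneg_left h3 hα.le
  have hsum1 : (1 : ℝ) ≤ ∑ i, c i := by
    calc (1:ℝ) = c i0 := hci0.symm
    _ ≤ ∑ i, c i := Finset.single_le_sum (fun i _ => hc0 i) (Finset.mem_univ i0)
  have expand : ∑ i, c i * (lam i + ε / 2) =
      (∑ i, c i * (lam i + ε)) - (ε / 2) * ∑ i, c i := by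
    rw [Finset.mul_sum, ← Finset.sum_sub_distrib]
    congr 1; ext i; ring
  calc ∑ i, c i * (lam i + ε / 2)
      = (∑ i, c i * (lam i + ε)) - (ε / 2) * ∑ i, c i := expand
    _ ≤ α * M - (ε / 2) * 1 := by
        apply sub_le_sub key
        exact mul_le_mul_of_nonneg_left hsum1 (by positivity)
    _ < α * M := by linarith
end
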